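/- For p = 3 and n ≥ 2, the reduction map GL_3(ℤ/3^n) → GL_3(ℤ/3) does not admit a group-homomorphism section. -/

import Mathlib

/-- Entrywise reduction modulo `p` on invertible matrices over `ℤ/pⁿ`. -/
def red (p n r : ℕ) (hn : 1 ≤ n) :
    GL (Fin r) (ZMod (p ^ n)) →* GL (Fin r) (ZMod p) :=
  Units.map ((ZMod.castHom (dvd_pow_self p (by omega)) (ZMod p)).mapMatrix).toMonoidHom

private lemma lem0 :
    ∀ u : ZMod (3^2), ZMod.castHom (show (3:ℕ) ∣ 3^2 by norm_num) (ZMod 3) u = 0 → ∃ t, u = 3 * t := by decide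

private lemma lem1 :
    ∀ u : ZMod (3^2), ZMod.castHom (show (3:ℕ) ∣ 3^2 by norm_num) (ZMod 3) u = 1 → ∃ t, u = 1 + 3 * t := by decide

private def xu : GL (Fin 3) (ZMod 3) :=
  ⟨!![1,1,0;0,1,0;0,0,1], !![1,2,0;0,1,0;0,0,1], by decide, by decide⟩

private def yu : GL (Fin 3) (ZMod 3) :=
  ⟨!![1,0,0;0,1,1;0,0,1], !![1,0,0;0,1,2;0,0,1], by decide, by decide⟩

private def zu : GL (Fin 3) (ZMod 3) :=
  ⟨!![1,0,1;0,1,0;0,0,1], !![1,0,2;0,1,0;0,0,1], by decide, by decide⟩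

private lemma key : ¬ ∃ s : GL (Fin 3) (ZMod 3) →* GL (Fin 3) (ZMod (3 ^ 2)),
    (red 3 2 3 (by omega)).comp s = MonoidHom.id (GL (Fin 3) (ZMod 3)) := by
  rintro ⟨s, hs⟩
  have hz3 : zu ^ 3 = 1 := by exact Units.ext (by decide)
  have hxyz : xu * yu = yu * xu * zu := by exact Units.ext (by decide)
  set X := s xu with hX
  set Y := s yu with hY
  set Z := s zu with hZ
  have hZ3 : Z ^ 3 = 1 := by rw [hZ, ← map_pow, hz3, map_one]
  have hXY : X * Y = Y * X * Z := by
    rw [hX, hY, hZ, ← map_mul, ← map_mul, ← map_mul, hxyz]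
  set Mx : Matrix (Fin 3) (Fin 3) (ZMod (3^2)) := (X : Matrix (Fin 3) (Fin 3) (ZMod (3^2)))
  set My : Matrix (Fin 3) (Fin 3) (ZMod (3^2)) := (Y : Matrix (Fin 3) (Fin 3) (ZMod (3^2)))
  set Mz : Matrix (Fin 3) (Fin 3) (ZMod (3^2)) := (Z : Matrix (Fin 3) (Fin 3) (ZMod (3^2)))
  -- residue information
  have hvx : Mx.map (ZMod.castHom (show (3:ℕ) ∣ 3^2 by norm_num) (ZMod 3)) = !![1,1,0;0,1,0;0,0,1] := by
    have := DFunLike.congr_fun hs xu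
    have := congrArg Units.val this
    simpa [red, RingHom.mapMatrix_apply, xu, Mx, X] using this
  have hvy : My.map (ZMod.castHom (show (3:ℕ) ∣ 3^2 by norm_num) (ZMod 3)) = !![1,0,0;0,1,1;0,0,1] := by
    have := DFunLike.congr_fun hs yu
    have := congrArg Units.val this
    simpa [red, RingHom.mapMatrix_apply, yu, My, Y] using this
  have hvz : Mz.map (ZMod.castHom (show (3:ℕ) ∣ 3^2 by norm_num) (ZMod 3)) = !![1,0,1;0,1,0;0,0,1] := by
    have := DFunLike.congr_fun hs zu
    have := congrArg Units.val this
    simpa [red, RingHom.mapMatrix_apply, zu, Mz, Z] using this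
  -- matrix-level relations
  have hMz3 : Mz * (Mz * Mz) = 1 := by
    have := congrArg Units.val hZ3
    simpa [pow_succ, mul_assoc] using this
  have hMxy : Mx * My = My * Mx * Mz := congrArg Units.val hXY
  have e1 : (Mz * (Mz * Mz)) 0 2 = 0 := by rw [hMz3]; simp [Matrix.one_apply]
  have e2 : (Mx * My) 2 0 = (My * Mx * Mz) 2 0 := by rw [hMxy]
  simp only [Matrix.mul_apply, Fin.sum_univ_three] at e1 e2
  have h9 : (9 : ZMod (3^2)) = 0 := by decide
  obtain ⟨ta00, hta00⟩ := lem1 _ (by have := congrFun (congrFun hvx 0) 0; simpa using this)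
  obtain ⟨ta01, hta01⟩ := lem1 _ (by have := congrFun (congrFun hvx 0) 1; simpa using this)
  obtain ⟨ta02, hta02⟩ := lem0 _ (by have := congrFun (congrFun hvx 0) 2; simpa using this)
  obtain ⟨ta10, hta10⟩ := lem0 _ (by have := congrFun (congrFun hvx 1) 0; simpa using this)
  obtain ⟨ta11, hta11⟩ := lem1 _ (by have := congrFun (congrFun hvx 1) 1; simpa using this)
  obtain ⟨ta12, hta12⟩ := lem0 _ (by have := congrFun (congrFun hvx 1) 2; simpa using this)
  obtain ⟨ta20, hta20⟩ := lem0 _ (by have := congrFun (congrFun hvx 2) 0; simpa using this)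
  obtain ⟨ta21, hta21⟩ := lem0 _ (by have := congrFun (congrFun hvx 2) 1; simpa using this)
  obtain ⟨ta22, hta22⟩ := lem1 _ (by have := congrFun (congrFun hvx 2) 2; simpa using this)
  obtain ⟨tb00, htb00⟩ := lem1 _ (by have := congrFun (congrFun hvy 0) 0; simpa using this)
  obtain ⟨tb01, htb01⟩ := lem0 _ (by have := congrFun (congrFun hvy 0) 1; simpa using this)
  obtain ⟨tb02, htb02⟩ := lem0 _ (by have := congrFun (congrFun hvy 0) 2; simpa using this)
  obtain ⟨tb10, htb10⟩ := lem0 _ (by have := congrFun (congrFun hvy 1) 0; simpa using this)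
  obtain ⟨tb11, htb11⟩ := lem1 _ (by have := congrFun (congrFun hvy 1) 1; simpa using this)
  obtain ⟨tb12, htb12⟩ := lem1 _ (by have := congrFun (congrFun hvy 1) 2; simpa using this)
  obtain ⟨tb20, htb20⟩ := lem0 _ (by have := congrFun (congrFun hvy 2) 0; simpa using this)
  obtain ⟨tb21, htb21⟩ := lem0 _ (by have := congrFun (congrFun hvy 2) 1; simpa using this)
  obtain ⟨tb22, htb22⟩ := lem1 _ (by have := congrFun (congrFun hvy 2) 2; simpa using this)
  obtain ⟨tc00, htc00⟩ := lem1 _ (by have := congrFun (congrFun hvz 0) 0; simpa using this)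
  obtain ⟨tc01, htc01⟩ := lem0 _ (by have := congrFun (congrFun hvz 0) 1; simpa using this)
  obtain ⟨tc02, htc02⟩ := lem1 _ (by have := congrFun (congrFun hvz 0) 2; simpa using this)
  obtain ⟨tc10, htc10⟩ := lem0 _ (by have := congrFun (congrFun hvz 1) 0; simpa using this)
  obtain ⟨tc11, htc11⟩ := lem1 _ (by have := congrFun (congrFun hvz 1) 1; simpa using this)
  obtain ⟨tc12, htc12⟩ := lem0 _ (by have := congrFun (congrFun hvz 1) 2; simpa using this)
  obtain ⟨tc20, htc20⟩ := lem0 _ (by have := congrFun (congrFun hvz 2) 0; simpa using this)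
  obtain ⟨tc21, htc21⟩ := lem0 _ (by have := congrFun (congrFun hvz 2) 1; simpa using this)
  obtain ⟨tc22, htc22⟩ := lem1 _ (by have := congrFun (congrFun hvz 2) 2; simpa using this)
  simp only [hta00, hta01, hta02, hta10, hta11, hta12, hta20, hta21, hta22, htb00, htb01,
    htb02, htb10, htb11, htb12, htb20, htb21, htb22, htc00, htc01, htc02, htc10, htc11,
    htc12, htc20, htc21, htc22] at e1 e2
  have hA : (3 : ZMod (3^2)) + 3 * tc20 = 0 := by
    linear_combination e1 - (1*tc00 + 1*tc00*tc00 + 3*tc00*tc00*tc02 + 3*tc00*tc01*tc12 + 3*tc00*tc02 + 3*tc00*tc02*tc22 + 1*tc00*tc22 + 3*tc01*tc02*tc10 + 1*tc01*tc10 + 3*tc01*tc11*tc12 + 3*tc01*tc12 + 3*tc01*tc12*tc22 + 1*tc02 + 3*tc02*tc02*tc20 + 3*tc02*tc12*tc21 + 2*tc02*tc20 + 3*tc02*tc22 + 3*tc02*tc22*tc22 + 1*tc12*tc21 + 1*tc22 + 1*tc22*tc22) * h9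
  have hB : (6 : ZMod (3^2)) * tc20 = 0 := by
    linear_combination e2 - (-1*ta00*tb20 - 3*ta00*tb20*tc00 - 3*ta01*tb20*tc10 - 3*ta02*tb20*tc20 - 1*ta10*tb21 - 3*ta10*tb21*tc00 - 3*ta11*tb21*tc10 - 3*ta12*tb21*tc20 + 1*ta20*tb00 - 1*ta20*tb22 - 3*ta20*tb22*tc00 - 1*ta20*tc00 + 1*ta21*tb10 - 3*ta21*tb22*tc10 - 1*ta21*tc10 + 1*ta22*tb20 - 3*ta22*tb22*tc20 - 1*ta22*tc20 - 1*tb20*tc00 - 1*tb20*tc10 - 1*tb21*tc10 - 1*tb22*tc20 - 1*tc20) * h9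
  have : (3 : ZMod (3^2)) = 0 := by linear_combination hA + hB - tc20 * h9
  exact absurd this (by decide)

/-- For `p = 3` and `n ≥ 2`, the reduction map `GL₃(ℤ/3ⁿ) → GL₃(ℤ/3)` admits no
group-homomorphism section. -/
theorem stmt13 (n : ℕ) (hn : 2 ≤ n) :
    ¬ ∃ s : GL (Fin 3) (ZMod 3) →* GL (Fin 3) (ZMod (3 ^ n)),
        (red 3 n 3 (by omega)).comp s = MonoidHom.id (GL (Fin 3) (ZMod 3)) := by
  rintro ⟨s, hs⟩
  apply key
  refine ⟨(Units.map ((ZMod.castHom (pow_dvd_pow 3 hn)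
      (ZMod (3^2))).mapMatrix).toMonoidHom).comp s, ?_⟩
  ext g : 1
  have hg := DFunLike.congr_fun hs g
  refine Units.ext ?_
  show (ZMod.castHom (show (3:ℕ) ∣ 3^2 by norm_num) (ZMod 3)).mapMatrix
      ((ZMod.castHom (pow_dvd_pow 3 hn) (ZMod (3^2))).mapMatrix (s g).val)
    = ((MonoidHom.id (GL (Fin 3) (ZMod 3))) g).val
  rw [← RingHom.comp_apply, RingHom.mapMatrix_comp, ZMod.castHom_comp]
  exact congrArg Units.val hg
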